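/- For the canonical paths η_{x,y} on the torus S_N (moving each coordinate in turn along the shortest segment), the congestion quantity M_N := N^{−d} · max_{bond a} Σ_{bonds a'} M(a,a') satisfies M_N ≤ 4d·N², where M(a,a') = #{(x,y) ∈ S_N × S_N : a, a' ∈ η_{x,y}}. -/

import Mathlib

open Real Finset

noncomputable section

attribute [local instance] Classical.propDecidable

/-- Sites of the `d`-dimensional discrete torus of side `N`. -/
abbrev TorusV (d N : ℕ) := Fin d → ZMod N

/-- Unit vector in direction `i` on the torus. -/
def tunit (d N : ℕ) (i : Fin d) : TorusV d N := fun j => if j = i then 1 else 0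

/-- A bond of the torus, encoded by base point and direction. -/
abbrev Bond (d N : ℕ) := TorusV d N × Fin d

/-- One-dimensional segment on `ZMod N` from `a` to `b` along the longest arc
(ties broken by going in the `+` direction). -/
def seg (N : ℕ) [NeZero N] (a b : ZMod N) : List (ZMod N) :=
  if (a - b).val ≤ (b - a).val then
    (List.range ((b - a).val + 1)).map (fun k => a + (k : ZMod N))
  else
    (List.range ((a - b).val + 1)).map (fun k => a - (k : ZMod N))

/-- Intermediate point of the canonical path: coordinates `< j` already matched to
`y`, coordinate `j` equal to `c`, coordinates `> j` still those of `x`. -/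
def midpt (d N : ℕ) (x y : TorusV d N) (j : Fin d) (c : ZMod N) : TorusV d N :=
  fun i => if i < j then y i else if i = j then c else x i

/-- Canonical path `η_{x,y}`: match the coordinates `1, 2, …, d` one at a time,
each along the longest segment. -/
def cpath (d N : ℕ) [NeZero N] (x y : TorusV d N) : List (TorusV d N) :=
  (List.finRange d).flatMap (fun j => (seg N (x j) (y j)).map (midpt d N x y j))

/-- The bond `b` lies on the path `l`. -/
def onPath (d N : ℕ) (b : Bond d N) (l : List (TorusV d N)) : Prop :=
  ∃ k : ℕ,
    (l[k]? = some b.1 ∧ l[k + 1]? = some (b.1 + tunit d N b.2)) ∨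
    (l[k]? = some (b.1 + tunit d N b.2) ∧ l[k + 1]? = some b.1)

/-- `M(a,a') = #{(x,y) : a, a' ∈ η_{x,y}}`. -/
def Mcount (d N : ℕ) [NeZero N] (a a' : Bond d N) : ℕ :=
  (Finset.univ.filter (fun p : TorusV d N × TorusV d N =>
    onPath d N a (cpath d N p.1 p.2) ∧ onPath d N a' (cpath d N p.1 p.2))).card

/-! A bond `a = (p, i)` lies on `η_{x,y}` only while coordinate `i` is being matched, so `p`
agrees with `y` before `i` and with `x` after `i`. Hence `(x, y)` is determined by `a`, the
coordinates of `x` up to `i` and those of `y` from `i` on: at most `N ^ (d + 1)` pairs use `a`.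
Every path has at most `d N` sites, hence carries at most `2 d N` bonds, and double counting gives
`∑_{a'} M(a, a') ≤ 2 d N ^ (d + 2)`. -/

section CanonicalPaths

variable {d N : ℕ}

lemma midpt_apply_of_lt {x y : TorusV d N} {j i : Fin d} {c : ZMod N} (h : i < j) :
    midpt d N x y j c i = y i := by
  simp [midpt, h]

lemma midpt_apply_of_gt {x y : TorusV d N} {j i : Fin d} {c : ZMod N} (h : j < i) :
    midpt d N x y j c i = x i := by
  simp [midpt, h.not_gt, h.ne']

lemma tunit_apply_self (i : Fin d) : tunit d N i i = 1 := by
  simp [tunit]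

lemma tunit_apply_of_ne {i j : Fin d} (h : j ≠ i) : tunit d N i j = 0 := by
  simp [tunit, h]

lemma tunit_injective [Fact (1 < N)] : Function.Injective (tunit d N) := by
  intro i j h
  by_contra hij
  have := congrFun h i
  rw [tunit_apply_self, tunit_apply_of_ne hij] at this
  exact one_ne_zero this

lemma mem_of_onPath {a : Bond d N} {l : List (TorusV d N)} (h : onPath d N a l) :
    a.1 ∈ l ∧ a.1 + tunit d N a.2 ∈ l := by
  obtain ⟨k, ⟨h₁, h₂⟩ | ⟨h₁, h₂⟩⟩ := h
  · exact ⟨List.mem_of_getElem? h₁, List.mem_of_getElem? h₂⟩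
  · exact ⟨List.mem_of_getElem? h₂, List.mem_of_getElem? h₁⟩

lemma card_bondsFromTo_le_one [Fact (1 < N)] (u v : Option (TorusV d N)) :
    #{a : Bond d N | u = some a.1 ∧ v = some (a.1 + tunit d N a.2)} ≤ 1 := by
  refine card_le_one.2 fun a ha b hb => ?_
  simp only [mem_filter, mem_univ, true_and] at ha hb
  have h₁ : a.1 = b.1 := Option.some_injective _ (ha.1.symm.trans hb.1)
  have h₂ := Option.some_injective _ (ha.2.symm.trans hb.2)
  rw [h₁] at h₂
  exact Prod.ext h₁ (tunit_injective (add_left_cancel h₂))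

lemma card_bonds_onPath_le [Fact (1 < N)] (l : List (TorusV d N)) :
    #{a : Bond d N | onPath d N a l} ≤ 2 * l.length := by
  let bondsFromTo (u v : Option (TorusV d N)) : Finset (Bond d N) :=
    {a | u = some a.1 ∧ v = some (a.1 + tunit d N a.2)}
  have hsub : ({a | onPath d N a l} : Finset (Bond d N)) ⊆ (range l.length).biUnion
      fun k => bondsFromTo l[k]? l[k + 1]? ∪ bondsFromTo l[k + 1]? l[k]? := by
    intro a ha
    obtain ⟨k, hk⟩ := (mem_filter.1 ha).2
    have hklen : k < l.length := by
      rcases hk with ⟨h, -⟩ | ⟨h, -⟩ <;> exact (List.getElem?_eq_some_iff.1 h).1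
    simp only [mem_biUnion, mem_range, mem_union, bondsFromTo, mem_filter, mem_univ, true_and]
    exact ⟨k, hklen, hk.imp id And.symm⟩
  calc _ ≤ _ := card_le_card hsub
    _ ≤ ∑ k ∈ range l.length, #(bondsFromTo l[k]? l[k + 1]? ∪ bondsFromTo l[k + 1]? l[k]?) :=
        card_biUnion_le
    _ ≤ ∑ k ∈ range l.length, 2 := sum_le_sum fun k _ =>
        (card_union_le _ _).trans (add_le_add (card_bondsFromTo_le_one _ _)
          (card_bondsFromTo_le_one _ _))
    _ = 2 * l.length := by simp [mul_comm]

variable [NeZero N]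

lemma length_seg_le (u v : ZMod N) : (seg N u v).length ≤ N := by
  unfold seg
  split <;> simpa using ZMod.val_lt _

lemma length_cpath_le (x y : TorusV d N) : (cpath d N x y).length ≤ d * N := by
  simp only [cpath, List.length_flatMap, List.length_map]
  refine (List.sum_le_card_nsmul _ N ?_).trans (by simp)
  simpa using fun j => length_seg_le (x j) (y j)

lemma exists_midpt_of_mem_cpath {x y p : TorusV d N} (h : p ∈ cpath d N x y) :
    ∃ j c, p = midpt d N x y j c := by
  simp only [cpath, List.mem_flatMap, List.mem_map] at h
  obtain ⟨j, -, c, -, rfl⟩ := h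
  exact ⟨j, c, rfl⟩

lemma apply_eq_of_onPath_cpath [Fact (1 < N)] {x y p : TorusV d N} {i : Fin d}
    (h : onPath d N (p, i) (cpath d N x y)) :
    (∀ m < i, p m = y m) ∧ (∀ m, i < m → p m = x m) := by
  obtain ⟨hp, hq⟩ := mem_of_onPath h
  obtain ⟨j, c, rfl⟩ := exists_midpt_of_mem_cpath hp
  obtain ⟨j', c', hq⟩ := exists_midpt_of_mem_cpath hq
  have hoff : ∀ m ≠ i, midpt d N x y j c m = midpt d N x y j' c' m := fun m hm => by
    rw [← hq, Pi.add_apply, tunit_apply_of_ne hm, add_zero]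
  have hon : midpt d N x y j c i ≠ midpt d N x y j' c' i := by
    rw [← hq, Pi.add_apply, tunit_apply_self]
    exact (succ_ne_self _).symm
  constructor
  · intro m hm
    have : i ≤ j ∨ i ≤ j' := by
      by_contra! hji
      exact hon (by rw [midpt_apply_of_gt hji.1, midpt_apply_of_gt hji.2])
    rcases this with hij | hij
    · exact midpt_apply_of_lt (hm.trans_le hij)
    · rw [hoff m hm.ne]
      exact midpt_apply_of_lt (hm.trans_le hij)
  · intro m hm
    have : j ≤ i ∨ j' ≤ i := by
      by_contra! hji
      exact hon (by rw [midpt_apply_of_lt hji.1, midpt_apply_of_lt hji.2])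
    rcases this with hji | hji
    · exact midpt_apply_of_gt (hji.trans_lt hm)
    · rw [hoff m hm.ne']
      exact midpt_apply_of_gt (hji.trans_lt hm)

lemma card_pairs_onPath_cpath_le (a : Bond d N) :
    #{q : TorusV d N × TorusV d N | onPath d N a (cpath d N q.1 q.2)} ≤ N ^ (d + 1) := by
  obtain ⟨p, i⟩ := a
  obtain rfl | hN := (NeZero.one_le (n := N)).eq_or_lt
  · exact (card_filter_le _ _).trans (by simp)
  have : Fact (1 < N) := ⟨hN⟩
  calc _ ≤ Fintype.card (TorusV d N × ZMod N) := by
        refine card_le_card_of_injOn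
          (fun q => (fun m => if m ≤ i then q.1 m else q.2 m, q.2 i)) (by simp) ?_
        rintro ⟨x, y⟩ hxy ⟨x', y'⟩ hxy' heq
        simp only [coe_filter, mem_univ, true_and, Set.mem_ofPred_eq] at hxy hxy'
        simp only [Prod.mk.injEq, funext_iff] at heq
        obtain ⟨hy, hx⟩ := apply_eq_of_onPath_cpath hxy
        obtain ⟨hy', hx'⟩ := apply_eq_of_onPath_cpath hxy'
        simp only [Prod.mk.injEq, funext_iff]
        refine ⟨fun m => ?_, fun m => ?_⟩
        · rcases le_or_gt m i with hm | hm
          · simpa [hm] using heq.1 m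
          · rw [← hx m hm, hx' m hm]
        · rcases lt_trichotomy m i with hm | rfl | hm
          · rw [← hy m hm, hy' m hm]
          · exact heq.2
          · simpa [hm.not_ge] using heq.1 m
    _ = N ^ (d + 1) := by simp [pow_succ]

lemma card_bonds_onPath_cpath_le (x y : TorusV d N) :
    #{a : Bond d N | onPath d N a (cpath d N x y)} ≤ 2 * d * N := by
  obtain rfl | hN := (NeZero.one_le (n := N)).eq_or_lt
  · exact (card_filter_le _ _).trans (by simp; omega)
  have : Fact (1 < N) := ⟨hN⟩
  calc _ ≤ 2 * (cpath d N x y).length := card_bonds_onPath_le _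
    _ ≤ 2 * (d * N) := by grw [length_cpath_le]
    _ = 2 * d * N := by ring

lemma sum_Mcount_le (a : Bond d N) : ∑ a', Mcount d N a a' ≤ 2 * d * N ^ (d + 2) := by
  let pairsThrough : Finset (TorusV d N × TorusV d N) := {q | onPath d N a (cpath d N q.1 q.2)}
  calc ∑ a', Mcount d N a a'
      = ∑ q ∈ pairsThrough, #{a' : Bond d N | onPath d N a' (cpath d N q.1 q.2)} := by
        simp only [Mcount, ← filter_filter]
        exact sum_card_bipartiteAbove_eq_sum_card_bipartiteBelow _
    _ ≤ #pairsThrough * (2 * d * N) :=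
        sum_le_card_nsmul _ _ _ fun q _ => card_bonds_onPath_cpath_le q.1 q.2
    _ ≤ N ^ (d + 1) * (2 * d * N) := by grw [card_pairs_onPath_cpath_le]
    _ = 2 * d * N ^ (d + 2) := by ring

end CanonicalPaths

theorem canonical_path_congestion_general (d N : ℕ) [NeZero N] :
    ((N : ℝ) ^ d)⁻¹ *
        (⨆ a : Bond d N, ∑ a' : Bond d N, (Mcount d N a a' : ℝ))
      ≤ 4 * d * (N : ℝ) ^ 2 := by
  have hsup : ⨆ a : Bond d N, ∑ a', (Mcount d N a a' : ℝ) ≤ 2 * d * (N : ℝ) ^ (d + 2) :=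
    Real.iSup_le (fun a => by exact_mod_cast sum_Mcount_le a) (by positivity)
  have hN : (0 : ℝ) < N := by exact_mod_cast NeZero.pos N
  calc _ ≤ ((N : ℝ) ^ d)⁻¹ * (2 * d * (N : ℝ) ^ (d + 2)) := by gcongr
    _ = 2 * d * (N : ℝ) ^ 2 := by field_simp; ring
    _ ≤ 4 * d * (N : ℝ) ^ 2 := by gcongr; norm_num

/-- the congestion quantity
`M_N = N^{-d} max_a Σ_{a'} M(a,a')` of the canonical paths satisfies `M_N ≤ 4dN²`. -/
theorem canonical_path_congestion (d N : ℕ) [NeZero N] (hd : 0 < d) :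
    ((N : ℝ) ^ d)⁻¹ *
        (⨆ a : Bond d N, ∑ a' : Bond d N, (Mcount d N a a' : ℝ))
      ≤ 4 * d * (N : ℝ) ^ 2 :=
  canonical_path_congestion_general d N
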